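/- arXiv:0910.3888 — 4 statements merged into one kernel-verified Lean document; each statement's English description precedes it below -/
import Mathlib

section
/- Let E be a Banach space over 𝕜 (𝕜 = ℝ or ℂ), n ≥ 1, and A : E^n → 𝕜 a continuous symmetric n-linear form. Let m ≥ 1, let x_1, …, x_m ∈ E, let c ∈ 𝕜, and let ε ≥ 0 and C ≥ 0 be such that |A(x_{i_1}, …, x_{i_n}) − c| ≤ ε for every tuple (i_1, …, i_n) ∈ {1,…,m}^n of pairwise distinct indices, and |A(x_{i_1}, …, x_{i_n}) − c| ≤ C for every tuple (i_1, …, i_n) ∈ {1,…,m}^n. Then, setting y := (1/m) Σ_{i=1}^m x_i, one has |A(y, …, y) − c| ≤ ε + (1 − Π_{j=0}^{n−1} (1 − j/m)) · C. -/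
/-!
By multilinearity, `A(y, …, y) - c` is the average of `A(x_{f 1}, …, x_{f n}) - c` over all
`m ^ n` maps `f : Fin n → Fin m`. Of these, `m.descFactorial n` are injective and contribute at
most `ε` each; the others contribute at most `C`. The injective fraction
`m.descFactorial n / m ^ n` is exactly `∏_{j<n} (1 - j/m)`.
-/

open Finset

lemma prod_range_one_sub_div_eq_descFactorial_div_pow {K : Type*} [Field K] [CharZero K]
    {m : ℕ} (hm : m ≠ 0) (n : ℕ) :
    ∏ j ∈ range n, (1 - (j : K) / m) = m.descFactorial n / (m : K) ^ n := by
  induction n with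
  | zero => simp
  | succ n ih =>
    rw [prod_range_succ, ih, Nat.descFactorial_succ]
    rcases le_or_gt n m with hnm | hmn
    · rw [Nat.cast_mul, Nat.cast_sub hnm]
      field_simp
      ring
    · simp [Nat.descFactorial_eq_zero_iff_lt.mpr hmn]

lemma card_filter_injective_eq_descFactorial (α β : Type*) [Fintype α] [Fintype β]
    [DecidableEq α] [DecidableEq β] :
    #{f : α → β | Function.Injective f} = (Fintype.card β).descFactorial (Fintype.card α) := by
  rw [← Fintype.card_embedding_eq, ← Fintype.card_subtype]
  exact Fintype.card_congr (Equiv.subtypeInjectiveEquivEmbedding α β)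

lemma norm_sum_le_card_filter_mul_add_card_filter_not_mul {ι F : Type*} [Fintype ι]
    [SeminormedAddCommGroup F] (p : ι → Prop) [DecidablePred p] {g : ι → F} {ε C : ℝ}
    (hp : ∀ i, p i → ‖g i‖ ≤ ε) (hC : ∀ i, ‖g i‖ ≤ C) :
    ‖∑ i, g i‖ ≤ #{i | p i} * ε + #{i | ¬ p i} * C := by
  calc ‖∑ i, g i‖ ≤ ∑ i, ‖g i‖ := norm_sum_le _ _
    _ = ∑ i with p i, ‖g i‖ + ∑ i with ¬ p i, ‖g i‖ := (sum_filter_add_sum_filter_not _ _ _).symm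
    _ ≤ ∑ i with p i, ε + ∑ i with ¬ p i, C := by
      gcongr with i hi i
      · exact hp i (mem_filter.mp hi).2
      · exact hC i
    _ = #{i | p i} * ε + #{i | ¬ p i} * C := by simp only [sum_const, nsmul_eq_mul]

lemma norm_inv_card_smul_sum_le {ι 𝕜 F : Type*} [Fintype ι] [Nonempty ι] [RCLike 𝕜]
    [NormedAddCommGroup F] [NormedSpace 𝕜 F] (p : ι → Prop) [DecidablePred p] {g : ι → F}
    {ε C : ℝ} (hp : ∀ i, p i → ‖g i‖ ≤ ε) (hC : ∀ i, ‖g i‖ ≤ C) :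
    ‖(Fintype.card ι : 𝕜)⁻¹ • ∑ i, g i‖ ≤
      (#{i | p i} / Fintype.card ι : ℝ) * ε + (1 - #{i | p i} / Fintype.card ι : ℝ) * C := by
  have hcard : (Fintype.card ι : ℝ) ≠ 0 := Nat.cast_ne_zero.mpr Fintype.card_ne_zero
  have hsplit : (#{i | ¬ p i} : ℝ) = Fintype.card ι - #{i | p i} := by
    rw [eq_sub_iff_add_eq, ← Nat.cast_add, add_comm, card_filter_add_card_filter_not, card_univ]
  rw [norm_smul, norm_inv, RCLike.norm_natCast]
  calc (Fintype.card ι : ℝ)⁻¹ * ‖∑ i, g i‖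
      ≤ (Fintype.card ι : ℝ)⁻¹ * (#{i | p i} * ε + #{i | ¬ p i} * C) := by
        gcongr
        exact norm_sum_le_card_filter_mul_add_card_filter_not_mul p hp hC
    _ = _ := by
        rw [hsplit]
        field_simp

lemma MultilinearMap.map_inv_card_smul_sum_sub {ι κ 𝕜 E : Type*} [Fintype ι] [DecidableEq ι]
    [Fintype κ] [Nonempty κ] [Field 𝕜] [CharZero 𝕜] [AddCommGroup E] [Module 𝕜 E]
    (A : MultilinearMap 𝕜 (fun _ : ι => E) 𝕜) (x : κ → E) (c : 𝕜) :
    A (fun _ => (Fintype.card κ : 𝕜)⁻¹ • ∑ i, x i) - c =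
      (Fintype.card (ι → κ) : 𝕜)⁻¹ • ∑ f : ι → κ, (A (fun j => x (f j)) - c) := by
  have hcard : (Fintype.card (ι → κ) : 𝕜) ≠ 0 := Nat.cast_ne_zero.mpr Fintype.card_ne_zero
  rw [A.map_smul_univ, A.map_sum (fun _ i => x i), sum_sub_distrib, sum_const, card_univ,
    smul_sub, nsmul_eq_mul, smul_eq_mul _ (_ * c), inv_mul_cancel_left₀ hcard, prod_const,
    card_univ, Fintype.card_fun, Nat.cast_pow, inv_pow]

theorem symmetric_multilinear_average_estimate_general
    (𝕜 : Type*) [RCLike 𝕜] (E : Type*) [NormedAddCommGroup E] [NormedSpace 𝕜 E]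
    (n : ℕ)
    (A : ContinuousMultilinearMap 𝕜 (fun _ : Fin n => E) 𝕜)
    (m : ℕ) (hm : 1 ≤ m) (x : Fin m → E) (c : 𝕜) (ε C : ℝ) (hε : 0 ≤ ε)
    (hinj : ∀ f : Fin n → Fin m, Function.Injective f → ‖A (fun j => x (f j)) - c‖ ≤ ε)
    (hall : ∀ f : Fin n → Fin m, ‖A (fun j => x (f j)) - c‖ ≤ C) :
    ‖A (fun _ => (m : 𝕜)⁻¹ • ∑ i : Fin m, x i) - c‖
      ≤ ε + (1 - ∏ j ∈ Finset.range n, (1 - (j : ℝ) / (m : ℝ))) * C := by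
  classical
  have : Nonempty (Fin m) := ⟨⟨0, hm⟩⟩
  have hexpand := A.toMultilinearMap.map_inv_card_smul_sum_sub x c
  simp only [Fintype.card_fin, ContinuousMultilinearMap.coe_coe] at hexpand
  rw [hexpand]
  refine (norm_inv_card_smul_sum_le Function.Injective hinj hall).trans ?_
  rw [card_filter_injective_eq_descFactorial, Fintype.card_fun, Fintype.card_fin, Fintype.card_fin,
    prod_range_one_sub_div_eq_descFactorial_div_pow (by omega), Nat.cast_pow]
  have hfrac : (m.descFactorial n / (m : ℝ) ^ n) ≤ 1 :=
    div_le_one_of_le₀ (mod_cast Nat.descFactorial_le_pow m n) (by positivity)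
  gcongr
  exact mul_le_of_le_one_left hε hfrac

theorem symmetric_multilinear_average_estimate
    (𝕜 : Type*) [RCLike 𝕜] (E : Type*) [NormedAddCommGroup E] [NormedSpace 𝕜 E]
    [CompleteSpace E] (n : ℕ) (hn : 1 ≤ n)
    (A : ContinuousMultilinearMap 𝕜 (fun _ : Fin n => E) 𝕜)
    (hsymm : ∀ (σ : Equiv.Perm (Fin n)) (v : Fin n → E), A (fun j => v (σ j)) = A v)
    (m : ℕ) (hm : 1 ≤ m) (x : Fin m → E) (c : 𝕜) (ε C : ℝ) (hε : 0 ≤ ε) (hC : 0 ≤ C)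
    (hinj : ∀ f : Fin n → Fin m, Function.Injective f → ‖A (fun j => x (f j)) - c‖ ≤ ε)
    (hall : ∀ f : Fin n → Fin m, ‖A (fun j => x (f j)) - c‖ ≤ C) :
    ‖A (fun _ => (m : 𝕜)⁻¹ • ∑ i : Fin m, x i) - c‖
      ≤ ε + (1 - ∏ j ∈ Finset.range n, (1 - (j : ℝ) / (m : ℝ))) * C :=
  symmetric_multilinear_average_estimate_general 𝕜 E n A m hm x c ε C hε hinj hall
end

section
/- Let E and F be Banach spaces over 𝕜 (𝕜 = ℝ or ℂ), I a nonempty index set, and 𝔘 an ultrafilter on I. If T : E → F is an approximable operator (i.e., T lies in the operator-norm closure of the finite-rank continuous linear operators from E to F), then the ultrapower operator (T)_𝔘 : (E)_𝔘 → (F)_𝔘 is also approximable, i.e., it lies in the operator-norm closure of the finite-rank continuous linear operators from (E)_𝔘 to (F)_𝔘. -/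
set_option synthInstance.maxHeartbeats 1000000
set_option maxHeartbeats 1000000

open Filter Topology ENNReal NormedSpace

noncomputable section

variable (𝕜 : Type*) [RCLike 𝕜]

/-- The Banach space `ℓ∞(I, E)` of bounded families in `E` indexed by `I`,
with the supremum norm. -/
abbrev BoundedFamilies (I E : Type*) [NormedAddCommGroup E] : Type _ :=
  lp (fun _ : I => E) ⊤

/-- The constant family `(x)_{i ∈ I}`, as an element of `ℓ∞(I, E)`. -/
def constFamily (I : Type*) {E : Type*} [NormedAddCommGroup E] (x : E) :
    BoundedFamilies I E :=
  ⟨fun _ => x, memℓp_infty ⟨‖x‖, by rintro r ⟨i, rfl⟩; exact le_rfl⟩⟩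

/-- The subspace `N_𝔘 = {x ∈ ℓ∞(I,E) : lim_{i,𝔘} ‖x_i‖ = 0}`. -/
def ultraNullSubmodule (I : Type*) (𝔘 : Ultrafilter I) (E : Type*) [NormedAddCommGroup E]
    [NormedSpace 𝕜 E] : Submodule 𝕜 (BoundedFamilies I E) where
  carrier := {x | Tendsto (fun i => ‖x i‖) (𝔘 : Filter I) (𝓝 0)}
  zero_mem' := by
    simpa [lp.coeFn_zero] using (tendsto_const_nhds :
      Tendsto (fun _ : I => (0 : ℝ)) (𝔘 : Filter I) (𝓝 0))
  add_mem' := by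
    intro x y hx hy
    refine squeeze_zero (fun i => norm_nonneg _) (fun i => ?_) (by simpa using hx.add hy)
    have : (↑(x + y) : ∀ _ : I, _) = fun i => x i + y i := by
      rw [lp.coeFn_add]; rfl
    rw [this]
    exact norm_add_le _ _
  smul_mem' := by
    intro c x hx
    have h := hx.const_mul ‖c‖
    refine squeeze_zero (fun i => norm_nonneg _) (fun i => ?_) (by simpa using h)
    have : (↑(c • x) : ∀ _ : I, _) = fun i => c • x i := by
      rw [lp.coeFn_smul]; rfl
    rw [this]
    simp [norm_smul]

/-- The ultrapower `(E)_𝔘 = ℓ∞(I,E) / N_𝔘`, with the quotient norm. -/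
abbrev Ultrapower (I : Type*) (𝔘 : Ultrafilter I) (E : Type*) [NormedAddCommGroup E]
    [NormedSpace 𝕜 E] : Type _ :=
  BoundedFamilies I E ⧸ ultraNullSubmodule 𝕜 I 𝔘 E

/-- The quotient map `q_E : ℓ∞(I,E) → (E)_𝔘`. -/
def ultrapowerQuot (I : Type*) (𝔘 : Ultrafilter I) (E : Type*) [NormedAddCommGroup E]
    [NormedSpace 𝕜 E] (x : BoundedFamilies I E) : Ultrapower 𝕜 I 𝔘 E :=
  Submodule.Quotient.mk (p := ultraNullSubmodule 𝕜 I 𝔘 E) x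

/-- The canonical embedding `h_E : E → (E)_𝔘`, sending `x` to the class of the
constant family `(x)_{i ∈ I}`. -/
def diagonalEmbedding (I : Type*) (𝔘 : Ultrafilter I) (E : Type*) [NormedAddCommGroup E]
    [NormedSpace 𝕜 E] (x : E) : Ultrapower 𝕜 I 𝔘 E :=
  ultrapowerQuot 𝕜 I 𝔘 E (constFamily I x)

/-- The map `ℓ∞(I,E) → ℓ∞(I,F)` applying `T` coordinatewise: `(x_i)_i ↦ (T x_i)_i`
(a bounded family is mapped to a bounded family). -/
def lpInftyMap {I E F : Type*} [NormedAddCommGroup E] [NormedSpace 𝕜 E]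
    [NormedAddCommGroup F] [NormedSpace 𝕜 F] (T : E →L[𝕜] F)
    (x : BoundedFamilies I E) : BoundedFamilies I F :=
  ⟨fun i => T (x i), by
    obtain ⟨B, hB⟩ := memℓp_infty_iff.1 (lp.memℓp x)
    refine memℓp_infty ⟨‖T‖ * B, ?_⟩
    rintro r ⟨i, rfl⟩
    exact (T.le_opNorm _).trans
      (mul_le_mul_of_nonneg_left (hB (Set.mem_range_self i)) (norm_nonneg _))⟩

/-- An operator is *approximable* if it lies in the operator-norm closure of the
finite-rank continuous linear operators. -/
def IsApproximable {𝕜 E F : Type*} [RCLike 𝕜] [SeminormedAddCommGroup E] [NormedSpace 𝕜 E]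
    [SeminormedAddCommGroup F] [NormedSpace 𝕜 F] (T : E →L[𝕜] F) : Prop :=
  T ∈ closure {S : E →L[𝕜] F | FiniteDimensional 𝕜 (LinearMap.range (S : E →ₗ[𝕜] F))}

/-!
The map `T ↦ (T)_𝔘` is `1`-Lipschitz for the operator norm, so it sends the closure of the
finite-rank operators into the closure of its image. It also preserves finite rank: a bounded
family with values in a finite-dimensional subspace `V` converges along `𝔘` (as `V` is proper),
so its class in the ultrapower is the diagonal image of its limit. Hence the range of `(R)_𝔘`
lies in the diagonal image of the range of `R`.
-/

theorem Ultrafilter.exists_tendsto_of_isBounded_range {I X : Type*} [PseudoMetricSpace X]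
    [ProperSpace X] (𝔘 : Ultrafilter I) {f : I → X} (hf : Bornology.IsBounded (Set.range f)) :
    ∃ y, Tendsto f 𝔘 (𝓝 y) := by
  obtain ⟨y, -, hy⟩ := hf.isCompact_closure.ultrafilter_le_nhds (𝔘.map f)
    (le_principal_iff.2 <| mem_map.2 <| univ_mem' fun i => subset_closure ⟨i, rfl⟩)
  exact ⟨y, hy⟩

section QuotientNorm

variable {R M N : Type*} [NontriviallyNormedField R] [SeminormedAddCommGroup M]
  [NormedSpace R M] [SeminormedAddCommGroup N] [NormedSpace R N] (S : Submodule R M)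

theorem Submodule.norm_liftQL_le (f : M →L[R] N) (h : S ≤ f.ker) : ‖S.liftQL f h‖ ≤ ‖f‖ :=
  ContinuousLinearMap.opNorm_le_bound _ (norm_nonneg f) fun x =>
    (QuotientAddGroup.norm_lift_apply_le
      ((f : M →ₗ[R] N).toAddMonoidHom.mkNormedAddGroupHom ‖f‖ f.le_opNorm)
      (fun _ hx => h hx) x).trans
      (mul_le_mul_of_nonneg_right
        (NormedAddGroupHom.mkNormedAddGroupHom_norm_le _ (norm_nonneg f) _) (norm_nonneg x))

theorem Submodule.norm_mkQL_le : ‖S.mkQL‖ ≤ 1 :=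
  ContinuousLinearMap.opNorm_le_bound _ zero_le_one fun x => by
    simpa using Submodule.Quotient.norm_mk_le S x

end QuotientNorm

section Ultrapower

variable {𝕜} {I : Type*} (𝔘 : Ultrafilter I) {E F : Type*} [NormedAddCommGroup E]
  [NormedSpace 𝕜 E] [NormedAddCommGroup F] [NormedSpace 𝕜 F]

@[simp] theorem lpInftyMap_apply (T : E →L[𝕜] F) (x : BoundedFamilies I E) (i : I) :
    lpInftyMap 𝕜 T x i = T (x i) := rfl

theorem norm_lpInftyMap_le (T : E →L[𝕜] F) (x : BoundedFamilies I E) :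
    ‖lpInftyMap 𝕜 T x‖ ≤ ‖T‖ * ‖x‖ :=
  lp.norm_le_of_forall_le (by positivity) fun i =>
    T.le_opNorm_of_le (lp.norm_apply_le_norm ENNReal.top_ne_zero x i)

def lpInftyMapL (T : E →L[𝕜] F) : BoundedFamilies I E →L[𝕜] BoundedFamilies I F :=
  LinearMap.mkContinuous
    { toFun := lpInftyMap 𝕜 T
      map_add' := fun x y => lp.ext <| funext fun i => by simp
      map_smul' := fun c x => lp.ext <| funext fun i => by simp }
    ‖T‖ (norm_lpInftyMap_le T)

theorem lpInftyMap_mem_ultraNullSubmodule (T : E →L[𝕜] F) {x : BoundedFamilies I E}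
    (hx : x ∈ ultraNullSubmodule 𝕜 I 𝔘 E) :
    lpInftyMap 𝕜 T x ∈ ultraNullSubmodule 𝕜 I 𝔘 F :=
  squeeze_zero (fun _ => norm_nonneg _) (fun i => T.le_opNorm (x i)) <| by
    simpa using (show Tendsto (fun i => ‖x i‖) 𝔘 (𝓝 0) from hx).const_mul ‖T‖

def ultrapowerMap (T : E →L[𝕜] F) : Ultrapower 𝕜 I 𝔘 E →L[𝕜] Ultrapower 𝕜 I 𝔘 F :=
  (ultraNullSubmodule 𝕜 I 𝔘 E).liftQL ((ultraNullSubmodule 𝕜 I 𝔘 F).mkQL ∘L lpInftyMapL T)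
    fun _ hx => (Submodule.Quotient.mk_eq_zero _).2 (lpInftyMap_mem_ultraNullSubmodule 𝔘 T hx)

@[simp] theorem ultrapowerMap_ultrapowerQuot (T : E →L[𝕜] F) (x : BoundedFamilies I E) :
    ultrapowerMap 𝔘 T (ultrapowerQuot 𝕜 I 𝔘 E x) =
      ultrapowerQuot 𝕜 I 𝔘 F (lpInftyMap 𝕜 T x) :=
  rfl

theorem Ultrapower.ext {G : Type*} [TopologicalSpace G] [AddCommMonoid G] [Module 𝕜 G]
    {A B : Ultrapower 𝕜 I 𝔘 E →L[𝕜] G}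
    (h : ∀ x, A (ultrapowerQuot 𝕜 I 𝔘 E x) = B (ultrapowerQuot 𝕜 I 𝔘 E x)) : A = B :=
  ContinuousLinearMap.ext fun q => by
    obtain ⟨x, rfl⟩ := Submodule.Quotient.mk_surjective _ q
    exact h x

theorem norm_ultrapowerMap_le (T : E →L[𝕜] F) : ‖ultrapowerMap 𝔘 T‖ ≤ ‖T‖ :=
  calc ‖ultrapowerMap 𝔘 T‖ ≤ ‖(ultraNullSubmodule 𝕜 I 𝔘 F).mkQL ∘L lpInftyMapL T‖ :=
        Submodule.norm_liftQL_le _ _ _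
    _ ≤ 1 * ‖T‖ := ContinuousLinearMap.opNorm_comp_le _ _ |>.trans <|
        mul_le_mul (Submodule.norm_mkQL_le _)
          (LinearMap.mkContinuous_norm_le _ (norm_nonneg T) _) (norm_nonneg _) zero_le_one
    _ = ‖T‖ := one_mul _

theorem ultrapowerMap_sub (T R : E →L[𝕜] F) :
    ultrapowerMap 𝔘 (T - R) = ultrapowerMap 𝔘 T - ultrapowerMap 𝔘 R :=
  Ultrapower.ext 𝔘 fun _ => rfl

theorem lipschitzWith_ultrapowerMap :
    LipschitzWith 1 (ultrapowerMap 𝔘 : (E →L[𝕜] F) → _) :=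
  LipschitzWith.of_dist_le_mul fun T R => by
    rw [dist_eq_norm (ultrapowerMap 𝔘 T), dist_eq_norm T, ← ultrapowerMap_sub, NNReal.coe_one,
      one_mul]
    exact norm_ultrapowerMap_le 𝔘 (T - R)

theorem ultrapowerQuot_eq_diagonalEmbedding_of_tendsto {x : BoundedFamilies I F} {y : F}
    (h : Tendsto (fun i => x i) 𝔘 (𝓝 y)) :
    ultrapowerQuot 𝕜 I 𝔘 F x = diagonalEmbedding 𝕜 I 𝔘 F y :=
  (Submodule.Quotient.eq _).2 (tendsto_iff_norm_sub_tendsto_zero.1 h)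

theorem exists_ultrapowerQuot_eq_diagonalEmbedding_of_forall_mem (V : Submodule 𝕜 F)
    [FiniteDimensional 𝕜 V] (x : BoundedFamilies I F) (hx : ∀ i, x i ∈ V) :
    ∃ y ∈ V, ultrapowerQuot 𝕜 I 𝔘 F x = diagonalEmbedding 𝕜 I 𝔘 F y := by
  let g : I → V := fun i => ⟨x i, hx i⟩
  have hg : Bornology.IsBounded (Set.range g) :=
    isBounded_iff_forall_norm_le.2 ⟨‖x‖, by
      rintro _ ⟨i, rfl⟩
      exact lp.norm_apply_le_norm ENNReal.top_ne_zero x i⟩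
  obtain ⟨y, hy⟩ := 𝔘.exists_tendsto_of_isBounded_range hg
  exact ⟨y, y.2, ultrapowerQuot_eq_diagonalEmbedding_of_tendsto 𝔘
    ((continuous_subtype_val.tendsto y).comp hy)⟩

def diagonalEmbeddingₗ : F →ₗ[𝕜] Ultrapower 𝕜 I 𝔘 F where
  toFun := diagonalEmbedding 𝕜 I 𝔘 F
  map_add' _ _ := rfl
  map_smul' _ _ := rfl

theorem finiteDimensional_range_ultrapowerMap (R : E →L[𝕜] F)
    [FiniteDimensional 𝕜 (LinearMap.range (R : E →ₗ[𝕜] F))] :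
    FiniteDimensional 𝕜 (LinearMap.range (ultrapowerMap 𝔘 R).toLinearMap) := by
  refine Submodule.finiteDimensional_of_le
    (S₂ := (LinearMap.range (R : E →ₗ[𝕜] F)).map (diagonalEmbeddingₗ 𝔘)) ?_
  rintro _ ⟨q, rfl⟩
  obtain ⟨x, rfl⟩ := Submodule.Quotient.mk_surjective _ q
  obtain ⟨y, hy, h⟩ := exists_ultrapowerQuot_eq_diagonalEmbedding_of_forall_mem 𝔘 _
    (lpInftyMap 𝕜 R x) fun i => LinearMap.mem_range_self _ (x i)
  exact ⟨y, hy, h.symm⟩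

end Ultrapower

theorem ultrapower_operator_of_approximable_isApproximable_general
    (𝕜 : Type*) [RCLike 𝕜] (I : Type*) (𝔘 : Ultrafilter I)
    (E : Type*) [NormedAddCommGroup E] [NormedSpace 𝕜 E]
    (F : Type*) [NormedAddCommGroup F] [NormedSpace 𝕜 F]
    (T : E →L[𝕜] F) (hT : IsApproximable T)
    (S : Ultrapower 𝕜 I 𝔘 E →L[𝕜] Ultrapower 𝕜 I 𝔘 F)
    (hS : ∀ x : BoundedFamilies I E,
      S (ultrapowerQuot 𝕜 I 𝔘 E x) = ultrapowerQuot 𝕜 I 𝔘 F (lpInftyMap 𝕜 T x)) :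
    IsApproximable S := by
  obtain rfl : S = ultrapowerMap 𝔘 T :=
    Ultrapower.ext 𝔘 fun x => (hS x).trans (ultrapowerMap_ultrapowerQuot 𝔘 T x).symm
  exact map_mem_closure (lipschitzWith_ultrapowerMap 𝔘).continuous hT
    fun R (_ : FiniteDimensional 𝕜 _) => finiteDimensional_range_ultrapowerMap 𝔘 R

theorem ultrapower_operator_of_approximable_isApproximable
    (𝕜 : Type*) [RCLike 𝕜] (I : Type*) [Nonempty I] (𝔘 : Ultrafilter I)
    (E : Type*) [NormedAddCommGroup E] [NormedSpace 𝕜 E] [CompleteSpace E]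
    (F : Type*) [NormedAddCommGroup F] [NormedSpace 𝕜 F] [CompleteSpace F]
    (T : E →L[𝕜] F) (hT : IsApproximable T)
    (S : Ultrapower 𝕜 I 𝔘 E →L[𝕜] Ultrapower 𝕜 I 𝔘 F)
    (hS : ∀ x : BoundedFamilies I E,
      S (ultrapowerQuot 𝕜 I 𝔘 E x) = ultrapowerQuot 𝕜 I 𝔘 F (lpInftyMap 𝕜 T x)) :
    IsApproximable S :=
  ultrapower_operator_of_approximable_isApproximable_general 𝕜 I 𝔘 E F T hT S hS
end
end

section
/- Let E be a Banach space over 𝕜 (𝕜 = ℝ or ℂ), I a nonempty index set, 𝔘 an ultrafilter on I, n ≥ 1, A : E^n → 𝕜 a continuous symmetric n-linear form, and P(x) := A(x, …, x) the associated continuous n-homogeneous polynomial. Let Ā be the iterated extension of A to the ultrapower (E)_𝔘 (the unique continuous n-linear form on (E)_𝔘 satisfying: (a) Ā(h_E x_1, …, h_E x_n) = A(x_1, …, x_n) for all x_1, …, x_n ∈ E; and (b) for every 1 ≤ j ≤ n, all x_1, …, x_{j−1} ∈ E, every bounded family y = (y_i)_{i∈I} in E, and all z_{j+1}, …, z_n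 ∈ (E)_𝔘, Ā(h_E x_1, …, h_E x_{j−1}, q_E y, z_{j+1}, …, z_n) = lim_{i,𝔘} Ā(h_E x_1, …, h_E x_{j−1}, h_E y_i, z_{j+1}, …, z_n)), and set P̄(z) := Ā(z, …, z). Then the uniform norms coincide: sup{|P̄(z)| : z ∈ (E)_𝔘, ‖z‖ ≤ 1} = sup{|P(x)| : x ∈ E, ‖x‖ ≤ 1}. -/
set_option synthInstance.maxHeartbeats 1000000
set_option maxHeartbeats 1000000

open Filter Topology ENNReal NormedSpace

noncomputable section

variable (𝕜 : Type*) [RCLike 𝕜]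

/-- `Abar` is the *iterated extension* of the continuous `n`-linear form `A` to the
ultrapower `(E)_𝔘`: it agrees with `A` on (the image under `h_E` of) `E`, and it is
obtained by iterated limits along `𝔘`, one variable at a time, from the last variable
to the first. -/
def IsIteratedExtension {𝕜 : Type*} [RCLike 𝕜] {I : Type*} {𝔘 : Ultrafilter I}
    {E : Type*} [NormedAddCommGroup E] [NormedSpace 𝕜 E] {n : ℕ}
    (A : ContinuousMultilinearMap 𝕜 (fun _ : Fin n => E) 𝕜)
    (Abar : ContinuousMultilinearMap 𝕜 (fun _ : Fin n => Ultrapower 𝕜 I 𝔘 E) 𝕜) : Prop :=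
  (∀ x : Fin n → E, Abar (fun j => diagonalEmbedding 𝕜 I 𝔘 E (x j)) = A x) ∧
  (∀ (j : Fin n) (x : Fin n → E) (y : BoundedFamilies I E)
      (z : Fin n → Ultrapower 𝕜 I 𝔘 E),
    Tendsto
      (fun i => Abar (fun l => if l < j then diagonalEmbedding 𝕜 I 𝔘 E (x l)
        else if l = j then diagonalEmbedding 𝕜 I 𝔘 E (y i) else z l))
      (𝔘 : Filter I)
      (𝓝 (Abar (fun l => if l < j then diagonalEmbedding 𝕜 I 𝔘 E (x l)
        else if l = j then ultrapowerQuot 𝕜 I 𝔘 E y else z l))))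


/-!
Fix a family `y` in the unit ball of `ℓ∞(I, E)` and `ε > 0`. Because `Ā` is obtained by iterated
limits along `𝔘`, one can choose indices `i₀, i₁, …` one after another so that, writing
`x_k = y_{i_k}`, every value `A(x_{k₁}, …, x_{kₙ})` with `k₁ < ⋯ < kₙ` is within `nε` of
`P̄(q_E y)`: passing from `(h x_{k₁}, …, h x_{k_{j-1}}, q y, …, q y)` to
`(h x_{k₁}, …, h x_{k_j}, q y, …, q y)` costs at most `ε`. By symmetry the same holds for distinct
`k₁, …, kₙ`. Expanding `P((x₀ + ⋯ + x_{m-1}) / m) = m⁻ⁿ ∑_r A(x_{r 1}, …, x_{r n})` over all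
`r : Fin n → Fin m`, the proportion `1 - m.descFactorial n / mⁿ` of non-injective `r` tends to `0`,
so `‖P̄(q y)‖ ≤ sup_{‖e‖ ≤ 1} ‖P e‖ + nε`. Every point of the open unit ball of `(E)_𝔘` is such a
`q y`, and the closed ball is its closure. The reverse inequality holds because `h_E` does not
increase norms and `Ā ∘ h_E = A`.
-/

variable {𝕜}

theorem tendsto_descFactorial_div_pow (n : ℕ) :
    Tendsto (fun m : ℕ => (m.descFactorial n : ℝ) / (m : ℝ) ^ n) atTop (𝓝 1) := by
  have h := (descPochhammer ℝ n).isEquivalent_atTop_lead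
  simp only [(monic_descPochhammer ℝ n).leadingCoeff, descPochhammer_natDegree, one_mul] at h
  have h' := (Asymptotics.isEquivalent_iff_tendsto_one
    ((eventually_gt_atTop 0).mono fun x hx => (pow_pos hx n).ne')).1 h
  simpa [Function.comp_def, descPochhammer_eval_eq_descFactorial] using
    h'.comp tendsto_natCast_atTop_atTop

theorem card_filter_injective_fin_eq_descFactorial (n m : ℕ) :
    (Finset.univ.filter fun r : Fin n → Fin m => Function.Injective r).card =
      m.descFactorial n := by
  rw [← Fintype.card_subtype, Fintype.card_congr (Equiv.subtypeInjectiveEquivEmbedding _ _),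
    Fintype.card_embedding_eq, Fintype.card_fin, Fintype.card_fin]

namespace ContinuousMultilinearMap

variable {E F : Type*} [SeminormedAddCommGroup E] [NormedSpace 𝕜 E] [SeminormedAddCommGroup F]
  [NormedSpace 𝕜 F] {n : ℕ}

theorem bddAbove_range_norm_apply_const (A : ContinuousMultilinearMap 𝕜 (fun _ : Fin n => E) F) :
    BddAbove (Set.range fun z : Metric.closedBall (0 : E) 1 => ‖A (fun _ => (z : E))‖) := by
  refine ⟨‖A‖, ?_⟩
  rintro _ ⟨z, rfl⟩
  simpa using A.le_opNorm_mul_prod_of_le (b := fun _ => 1) fun _ =>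
    mem_closedBall_zero_iff.1 z.2

theorem norm_apply_const_average_le {C : ℝ}
    (A : ContinuousMultilinearMap 𝕜 (fun _ : Fin n => E) F)
    (hC : ∀ e : E, ‖e‖ ≤ 1 → ‖A (fun _ => e)‖ ≤ C) {m : ℕ} (hm : 0 < m) {x : Fin m → E}
    (hx : ∀ k, ‖x k‖ ≤ 1) :
    ‖∑ r : Fin n → Fin m, A (fun l => x (r l))‖ ≤ (m : ℝ) ^ n * C := by
  classical
  have hm' : (m : 𝕜) ≠ 0 := Nat.cast_ne_zero.2 hm.ne'
  have havg : ‖(m : 𝕜)⁻¹ • ∑ k, x k‖ ≤ 1 := by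
    rw [norm_smul, norm_inv, RCLike.norm_natCast, inv_mul_le_one₀ (by exact_mod_cast hm)]
    simpa using (norm_sum_le Finset.univ x).trans
      (Finset.sum_le_card_nsmul Finset.univ _ 1 fun k _ => hx k)
  have hsum : ∑ r : Fin n → Fin m, A (fun l => x (r l)) =
      (m : 𝕜) ^ n • A (fun _ => (m : 𝕜)⁻¹ • ∑ k, x k) := by
    rw [← A.map_sum fun _ k => x k, ← Fin.prod_const, ← A.map_smul_univ, smul_inv_smul₀ hm']
  rw [hsum, norm_smul, norm_pow, RCLike.norm_natCast]
  gcongr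
  exact hC _ havg

theorem pow_mul_norm_le_of_forall_injective
    (A : ContinuousMultilinearMap 𝕜 (fun _ : Fin n => E) F) {C η : ℝ}
    (hC : ∀ e : E, ‖e‖ ≤ 1 → ‖A (fun _ => e)‖ ≤ C) {x : ℕ → E} (hx : ∀ k, ‖x k‖ ≤ 1) {L : F}
    (hL : ∀ f : Fin n → ℕ, Function.Injective f → ‖A (x ∘ f) - L‖ ≤ η) {m : ℕ} (hm : 0 < m) :
    (m : ℝ) ^ n * ‖L‖ ≤
      m ^ n * C + m.descFactorial n * η + (m ^ n - m.descFactorial n) * (‖A‖ + ‖L‖) := by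
  classical
  have hterm : ∀ r : Fin n → Fin m, ‖A (fun l => x (r l)) - L‖ ≤
      if Function.Injective r then η else ‖A‖ + ‖L‖ := by
    intro r
    split_ifs with hr
    · exact hL _ (Fin.val_injective.comp hr)
    · have hA : ‖A (fun l => x (r l))‖ ≤ ‖A‖ := by
        simpa using A.le_opNorm_mul_prod_of_le (b := fun _ => 1) fun l => hx _
      linarith [norm_sub_le (A fun l => x (r l)) L]
  have hcount : ∑ r : Fin n → Fin m, (if Function.Injective r then η else ‖A‖ + ‖L‖) =
      m.descFactorial n * η + (m ^ n - m.descFactorial n) * (‖A‖ + ‖L‖) := by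
    have hcard := Finset.card_filter_add_card_filter_not (s := Finset.univ)
      (fun r : Fin n → Fin m => Function.Injective r)
    rw [card_filter_injective_fin_eq_descFactorial, Finset.card_univ, Fintype.card_fun,
      Fintype.card_fin, Fintype.card_fin] at hcard
    rw [Finset.sum_ite, Finset.sum_const, Finset.sum_const,
      card_filter_injective_fin_eq_descFactorial, nsmul_eq_mul, nsmul_eq_mul, ← Nat.cast_pow,
      ← hcard]
    push_cast
    ring
  calc (m : ℝ) ^ n * ‖L‖ = ‖∑ r : Fin n → Fin m, A (fun l => x (r l)) -
        ∑ r : Fin n → Fin m, (A (fun l => x (r l)) - L)‖ := by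
        rw [Finset.sum_sub_distrib, _root_.sub_sub_cancel, Finset.sum_const, Finset.card_univ,
          Fintype.card_fun, Fintype.card_fin, Fintype.card_fin, ← Nat.cast_smul_eq_nsmul 𝕜,
          norm_smul]
        simp
    _ ≤ m ^ n * C + ∑ r : Fin n → Fin m, ‖A (fun l => x (r l)) - L‖ :=
        (norm_sub_le _ _).trans (add_le_add (A.norm_apply_const_average_le hC hm fun k => hx k)
          (norm_sum_le _ _))
    _ ≤ _ := by
        rw [add_assoc, ← hcount]
        gcongr with r
        exact hterm r

theorem norm_le_add_of_forall_injective
    (A : ContinuousMultilinearMap 𝕜 (fun _ : Fin n => E) F) {C η : ℝ}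
    (hC : ∀ e : E, ‖e‖ ≤ 1 → ‖A (fun _ => e)‖ ≤ C) {x : ℕ → E} (hx : ∀ k, ‖x k‖ ≤ 1) {L : F}
    (hL : ∀ f : Fin n → ℕ, Function.Injective f → ‖A (x ∘ f) - L‖ ≤ η) : ‖L‖ ≤ C + η := by
  set u : ℕ → ℝ := fun m => (m.descFactorial n : ℝ) / (m : ℝ) ^ n
  have hu : Tendsto u atTop (𝓝 1) := tendsto_descFactorial_div_pow n
  have hlim : Tendsto (fun m => C + u m * η + (1 - u m) * (‖A‖ + ‖L‖)) atTop (𝓝 (C + η)) := by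
    simpa using ((hu.mul_const η).const_add C).add
      (((tendsto_const_nhds (x := (1 : ℝ))).sub hu).mul_const (‖A‖ + ‖L‖))
  refine ge_of_tendsto hlim ((eventually_gt_atTop 0).mono fun m hm => ?_)
  have hpos : (0 : ℝ) < (m : ℝ) ^ n := by positivity
  have hexpand : (m : ℝ) ^ n * (C + u m * η + (1 - u m) * (‖A‖ + ‖L‖)) =
      m ^ n * C + m.descFactorial n * η + (m ^ n - m.descFactorial n) * (‖A‖ + ‖L‖) := by
    simp only [u]
    field_simp
  exact le_of_mul_le_mul_left
    ((A.pow_mul_norm_le_of_forall_injective hC hx hL hm).trans hexpand.ge) hpos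

theorem exists_strictMono_apply_comp_eq {α : Type*} [LinearOrder α]
    (A : ContinuousMultilinearMap 𝕜 (fun _ : Fin n => E) F)
    (hsymm : ∀ (σ : Equiv.Perm (Fin n)) (v : Fin n → E), A (fun j => v (σ j)) = A v)
    (x : α → E) {f : Fin n → α} (hf : Function.Injective f) :
    ∃ g : Fin n → α, StrictMono g ∧ A (x ∘ g) = A (x ∘ f) :=
  ⟨f ∘ Tuple.sort f,
    (Tuple.monotone_sort f).strictMono_of_injective (hf.comp (Tuple.sort f).injective),
    hsymm (Tuple.sort f) (x ∘ f)⟩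

end ContinuousMultilinearMap

section Ultrapower

variable {I : Type*} {𝔘 : Ultrafilter I} {E : Type*} [NormedAddCommGroup E] [NormedSpace 𝕜 E]
  {n : ℕ}

theorem norm_diagonalEmbedding_le (x : E) : ‖diagonalEmbedding 𝕜 I 𝔘 E x‖ ≤ ‖x‖ :=
  (Submodule.Quotient.norm_mk_le _ _).trans
    (lp.norm_le_of_forall_le (norm_nonneg x) fun _ => le_rfl)

def mixedTuple (v : Fin n → E) (j : ℕ) (w : Ultrapower 𝕜 I 𝔘 E) :
    Fin n → Ultrapower 𝕜 I 𝔘 E :=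
  fun l => if (l : ℕ) < j then diagonalEmbedding 𝕜 I 𝔘 E (v l) else w

theorem mixedTuple_zero (v : Fin n → E) (w : Ultrapower 𝕜 I 𝔘 E) :
    mixedTuple v 0 w = fun _ => w := by
  funext l
  simp [mixedTuple]

theorem mixedTuple_self (v : Fin n → E) (w : Ultrapower 𝕜 I 𝔘 E) :
    mixedTuple v n w = fun l => diagonalEmbedding 𝕜 I 𝔘 E (v l) := by
  funext l
  simp [mixedTuple]

theorem mixedTuple_congr {v v' : Fin n → E} {j : ℕ} (w : Ultrapower 𝕜 I 𝔘 E)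
    (h : ∀ l : Fin n, (l : ℕ) < j → v l = v' l) : mixedTuple v j w = mixedTuple v' j w := by
  funext l
  by_cases hl : (l : ℕ) < j <;> simp [mixedTuple, hl, h]

namespace IsIteratedExtension

variable {A : ContinuousMultilinearMap 𝕜 (fun _ : Fin n => E) 𝕜}
  {Abar : ContinuousMultilinearMap 𝕜 (fun _ : Fin n => Ultrapower 𝕜 I 𝔘 E) 𝕜}

theorem tendsto_mixedTuple (hAbar : IsIteratedExtension A Abar) (v : Fin n → E)
    (y : BoundedFamilies I E) (j : Fin n) :
    Tendsto (fun i => Abar (mixedTuple (Function.update v j (y i)) ((j : ℕ) + 1)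
      (ultrapowerQuot 𝕜 I 𝔘 E y))) 𝔘 (𝓝 (Abar (mixedTuple v j (ultrapowerQuot 𝕜 I 𝔘 E y)))) := by
  convert hAbar.2 j v y (fun _ => ultrapowerQuot 𝕜 I 𝔘 E y) using 3 with i
  all_goals
    funext l
    simp only [mixedTuple, Function.update_apply, Fin.lt_def, Fin.ext_iff]
    split_ifs <;> first | rfl | omega

theorem exists_forall_norm_sub_lt (hAbar : IsIteratedExtension A Abar)
    (y : BoundedFamilies I E) {ε : ℝ} (hε : 0 < ε) (s : Finset E) :
    ∃ i : I, ∀ (j : Fin n) (v : Fin n → E), (∀ l, v l ∈ s) →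
      ‖Abar (mixedTuple (Function.update v j (y i)) ((j : ℕ) + 1) (ultrapowerQuot 𝕜 I 𝔘 E y)) -
        Abar (mixedTuple v j (ultrapowerQuot 𝕜 I 𝔘 E y))‖ < ε := by
  have hev : ∀ᶠ i in (𝔘 : Filter I), ∀ (j : Fin n) (v : Fin n → s),
      ‖Abar (mixedTuple (Function.update (fun l => (v l : E)) j (y i)) ((j : ℕ) + 1)
          (ultrapowerQuot 𝕜 I 𝔘 E y)) -
        Abar (mixedTuple (fun l => (v l : E)) j (ultrapowerQuot 𝕜 I 𝔘 E y))‖ < ε :=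
    eventually_all.2 fun j => eventually_all.2 fun v =>
      (Metric.tendsto_nhds.1 (hAbar.tendsto_mixedTuple (fun l => (v l : E)) y j) ε hε).mono
        fun i hi => by rwa [dist_eq_norm] at hi
  obtain ⟨i, hi⟩ := hev.exists
  exact ⟨i, fun j v hv => hi j fun l => ⟨v l, hv l⟩⟩

theorem exists_seq_forall_strictMono_norm_sub_le (hAbar : IsIteratedExtension A Abar)
    (y : BoundedFamilies I E) {ε : ℝ} (hε : 0 < ε) :
    ∃ i : ℕ → I, ∀ f : Fin n → ℕ, StrictMono f →
      ‖A (fun l => y (i (f l))) - Abar (fun _ => ultrapowerQuot 𝕜 I 𝔘 E y)‖ ≤ n * ε := by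
  classical
  -- The `k`-th index is chosen for a finite set containing all earlier points, so its
  -- `ε`-condition covers every prefix of them; `insert 0` pads the coordinates `≥ j`, which
  -- `mixedTuple _ j` ignores.
  obtain ⟨p, hgood, hmem⟩ := exists_seq_of_forall_finset_exists (α := Finset E × I)
    (fun p => ∀ (j : Fin n) (v : Fin n → E), (∀ l, v l ∈ insert 0 p.1) →
      ‖Abar (mixedTuple (Function.update v j (y p.2)) ((j : ℕ) + 1) (ultrapowerQuot 𝕜 I 𝔘 E y)) -
        Abar (mixedTuple v j (ultrapowerQuot 𝕜 I 𝔘 E y))‖ < ε)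
    (fun p q => y p.2 ∈ q.1) fun S _ => by
      obtain ⟨i, hi⟩ := hAbar.exists_forall_norm_sub_lt y hε (insert 0 (S.image fun p => y p.2))
      exact ⟨(S.image fun p => y p.2, i), hi, fun p hp => Finset.mem_image_of_mem _ hp⟩
  refine ⟨fun k => (p k).2, fun f hf => ?_⟩
  set x : ℕ → E := fun k => y (p k).2
  set T : ℕ → 𝕜 := fun j => Abar (mixedTuple (x ∘ f) j (ultrapowerQuot 𝕜 I 𝔘 E y))
  have hstep : ∀ {j}, j < n → dist (T j) (T (j + 1)) ≤ ε := by
    intro j hj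
    set v : Fin n → E := fun l => if (l : ℕ) < j then x (f l) else 0
    have hv : ∀ l, v l ∈ insert 0 (p (f ⟨j, hj⟩)).1 := by
      intro l
      by_cases hl : (l : ℕ) < j
      · simp only [v, hl, if_true]
        exact Finset.mem_insert_of_mem (hmem _ _ (hf (Fin.lt_def.2 hl)))
      · simp [v, hl]
    have h := hgood (f ⟨j, hj⟩) ⟨j, hj⟩ v hv
    rw [mixedTuple_congr _ (v := v) (v' := x ∘ f) (fun l hl => if_pos hl),
      mixedTuple_congr _ (v' := x ∘ f) (fun l hl => ?_)] at h
    · rw [dist_comm, dist_eq_norm]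
      exact h.le
    · rcases eq_or_ne l ⟨j, hj⟩ with rfl | hne
      · simp [x]
      · have hlj : (l : ℕ) < j := by
          have hne' : (l : ℕ) ≠ j := fun h => hne (Fin.ext h)
          have hl' : (l : ℕ) < j + 1 := hl
          omega
        simp [Function.update_of_ne hne, v, hlj]
  have htel := dist_le_range_sum_of_dist_le n hstep
  simp only [Finset.sum_const, Finset.card_range, nsmul_eq_mul] at htel
  rw [dist_comm, dist_eq_norm] at htel
  simp only [T, mixedTuple_self, mixedTuple_zero, hAbar.1] at htel
  exact htel

theorem norm_apply_const_quot_le (hAbar : IsIteratedExtension A Abar)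
    (hsymm : ∀ (σ : Equiv.Perm (Fin n)) (v : Fin n → E), A (fun j => v (σ j)) = A v) {C : ℝ}
    (hC : ∀ e : E, ‖e‖ ≤ 1 → ‖A (fun _ => e)‖ ≤ C) {y : BoundedFamilies I E}
    (hy : ∀ i, ‖y i‖ ≤ 1) : ‖Abar (fun _ => ultrapowerQuot 𝕜 I 𝔘 E y)‖ ≤ C := by
  refine le_of_forall_pos_le_add fun ε hε => ?_
  have hε' : 0 < ε / (n + 1) := by positivity
  obtain ⟨i, hi⟩ := hAbar.exists_seq_forall_strictMono_norm_sub_le y hε'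
  have hinj : ∀ f : Fin n → ℕ, Function.Injective f →
      ‖A ((fun k => y (i k)) ∘ f) - Abar (fun _ => ultrapowerQuot 𝕜 I 𝔘 E y)‖ ≤
        n * (ε / (n + 1)) := fun f hf => by
    obtain ⟨g, hg, hgf⟩ := A.exists_strictMono_apply_comp_eq hsymm (fun k => y (i k)) hf
    exact hgf ▸ hi g hg
  refine (A.norm_le_add_of_forall_injective hC (fun k => hy (i k)) hinj).trans ?_
  gcongr
  rw [mul_div_assoc', div_le_iff₀ (by positivity)]
  nlinarith

theorem norm_apply_const_le (hAbar : IsIteratedExtension A Abar)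
    (hsymm : ∀ (σ : Equiv.Perm (Fin n)) (v : Fin n → E), A (fun j => v (σ j)) = A v) {C : ℝ}
    (hC : ∀ e : E, ‖e‖ ≤ 1 → ‖A (fun _ => e)‖ ≤ C) {z : Ultrapower 𝕜 I 𝔘 E} (hz : ‖z‖ ≤ 1) :
    ‖Abar (fun _ => z)‖ ≤ C := by
  let _ : NormedSpace ℝ (Ultrapower 𝕜 I 𝔘 E) := NormedSpace.restrictScalars ℝ 𝕜 _
  have hball : Metric.ball 0 1 ⊆ {z : Ultrapower 𝕜 I 𝔘 E | ‖Abar (fun _ => z)‖ ≤ C} := by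
    intro z hz
    obtain ⟨w, rfl, hw⟩ := Submodule.Quotient.norm_mk_lt z (sub_pos.2 (mem_ball_zero_iff.1 hz))
    exact hAbar.norm_apply_const_quot_le hsymm hC fun i =>
      (lp.norm_apply_le_norm ENNReal.top_ne_zero w i).trans (by linarith)
  have hclosed : IsClosed {z : Ultrapower 𝕜 I 𝔘 E | ‖Abar (fun _ => z)‖ ≤ C} :=
    isClosed_le (by fun_prop) continuous_const
  exact hclosed.closure_subset_iff.2 hball
    (by rwa [closure_ball 0 one_ne_zero, mem_closedBall_zero_iff])

end IsIteratedExtension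

end Ultrapower


theorem iterated_polynomial_extension_preserves_sup_norm_general
    (𝕜 : Type*) [RCLike 𝕜] (I : Type*) (𝔘 : Ultrafilter I)
    (E : Type*) [NormedAddCommGroup E] [NormedSpace 𝕜 E]
    (n : ℕ)
    (A : ContinuousMultilinearMap 𝕜 (fun _ : Fin n => E) 𝕜)
    (hsymm : ∀ (σ : Equiv.Perm (Fin n)) (v : Fin n → E), A (fun j => v (σ j)) = A v)
    (P : E → 𝕜) (hP : ∀ x : E, P x = A (fun _ => x))
    (Abar : ContinuousMultilinearMap 𝕜 (fun _ : Fin n => Ultrapower 𝕜 I 𝔘 E) 𝕜)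
    (hAbar : IsIteratedExtension A Abar)
    (Pbar : Ultrapower 𝕜 I 𝔘 E → 𝕜) (hPbar : ∀ w, Pbar w = Abar (fun _ => w)) :
    (⨆ z : Metric.closedBall (0 : Ultrapower 𝕜 I 𝔘 E) 1, ‖Pbar (z : Ultrapower 𝕜 I 𝔘 E)‖)
      = ⨆ x : Metric.closedBall (0 : E) 1, ‖P (x : E)‖ := by
  simp only [hP, hPbar]
  have : Nonempty (Metric.closedBall (0 : E) 1) := ⟨⟨0, Metric.mem_closedBall_self zero_le_one⟩⟩
  have : Nonempty (Metric.closedBall (0 : Ultrapower 𝕜 I 𝔘 E) 1) :=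
    ⟨⟨0, Metric.mem_closedBall_self zero_le_one⟩⟩
  have hC : ∀ e : E, ‖e‖ ≤ 1 →
      ‖A (fun _ => e)‖ ≤ ⨆ x : Metric.closedBall (0 : E) 1, ‖A (fun _ => (x : E))‖ :=
    fun e he => le_ciSup A.bddAbove_range_norm_apply_const ⟨e, mem_closedBall_zero_iff.2 he⟩
  refine le_antisymm (ciSup_le fun z => hAbar.norm_apply_const_le hsymm hC
    (mem_closedBall_zero_iff.1 z.2)) (ciSup_le fun x => ?_)
  rw [← hAbar.1 fun _ => x]
  refine le_ciSup Abar.bddAbove_range_norm_apply_const ⟨diagonalEmbedding 𝕜 I 𝔘 E x, ?_⟩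
  exact mem_closedBall_zero_iff.2 ((norm_diagonalEmbedding_le _).trans
    (mem_closedBall_zero_iff.1 x.2))

theorem iterated_polynomial_extension_preserves_sup_norm
    (𝕜 : Type*) [RCLike 𝕜] (I : Type*) [Nonempty I] (𝔘 : Ultrafilter I)
    (E : Type*) [NormedAddCommGroup E] [NormedSpace 𝕜 E] [CompleteSpace E]
    (n : ℕ) (hn : 1 ≤ n)
    (A : ContinuousMultilinearMap 𝕜 (fun _ : Fin n => E) 𝕜)
    (hsymm : ∀ (σ : Equiv.Perm (Fin n)) (v : Fin n → E), A (fun j => v (σ j)) = A v)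
    (P : E → 𝕜) (hP : ∀ x : E, P x = A (fun _ => x))
    (Abar : ContinuousMultilinearMap 𝕜 (fun _ : Fin n => Ultrapower 𝕜 I 𝔘 E) 𝕜)
    (hAbar : IsIteratedExtension A Abar)
    (Pbar : Ultrapower 𝕜 I 𝔘 E → 𝕜) (hPbar : ∀ w, Pbar w = Abar (fun _ => w)) :
    (⨆ z : Metric.closedBall (0 : Ultrapower 𝕜 I 𝔘 E) 1, ‖Pbar (z : Ultrapower 𝕜 I 𝔘 E)‖)
      = ⨆ x : Metric.closedBall (0 : E) 1, ‖P (x : E)‖ :=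
  iterated_polynomial_extension_preserves_sup_norm_general 𝕜 I 𝔘 E n A hsymm P hP Abar hAbar Pbar
    hPbar
end
end

section
/- Let E be a Banach space over 𝕜 (𝕜 = ℝ or ℂ), n ≥ 1, A : E^n → 𝕜 a continuous n-linear form, and κ_E : E → E'' the canonical embedding into the bidual. Then there exists a unique continuous n-linear form B : (E'')^n → 𝕜 such that: (a) B(κ_E x_1, …, κ_E x_n) = A(x_1, …, x_n) for all x_1, …, x_n ∈ E; and (b) for every j with 1 ≤ j ≤ n, all x_1, …, x_{j−1} ∈ E and all z_{j+1}, …, z_n ∈ E'', the map z ↦ B(κ_E x_1, …, κ_E x_{j−1}, z, z_{j+1}, …, z_n) from E'' to 𝕜 is continuous with respect to the weak-star topology on E''. Moreover ‖B‖ = ‖A‖, where ‖·‖ denotes the norm of a continuous multilinear form. -/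
set_option synthInstance.maxHeartbeats 1000000
set_option maxHeartbeats 1000000

open NormedSpace

/-- `B` is the *Aron–Berner extension* of the continuous `n`-linear form `A` to the
bidual: it agrees with `A` on (the image under the canonical embedding `κ_E` of) `E`,
and it is obtained by extending `A` one variable at a time, from the last variable to
the first, by weak-star continuity. -/
def IsAronBernerExtension {𝕜 E : Type*} [RCLike 𝕜] [NormedAddCommGroup E]
    [NormedSpace 𝕜 E] {n : ℕ}
    (A : ContinuousMultilinearMap 𝕜 (fun _ : Fin n => E) 𝕜)
    (B : ContinuousMultilinearMap 𝕜 (fun _ : Fin n => StrongDual 𝕜 (StrongDual 𝕜 E)) 𝕜) : Prop :=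
  (∀ x : Fin n → E, B (fun j => inclusionInDoubleDual 𝕜 E (x j)) = A x) ∧
  (∀ (j : Fin n) (x : Fin n → E) (z : Fin n → StrongDual 𝕜 (StrongDual 𝕜 E)),
    Continuous fun w : WeakDual 𝕜 (StrongDual 𝕜 E) =>
      B (fun l => if l < j then inclusionInDoubleDual 𝕜 E (x l)
        else if l = j then StrongDual.toWeakDual.symm w else z l))

/-! The extension is built by induction on `n`: `B(z₀, z') = z₀ (x ↦ B_x(z'))`, where `B_x` is
the extension of the `(n-1)`-linear form `A(x, ·)`. It is weak-star continuous in `z₀`, and, by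
induction, in each later slot once the earlier ones lie in `κ_E(E)`. Its norm is at most `‖A‖`,
and `‖A‖ ≤ ‖B‖` whenever `A = B ∘ κ_E`, since `‖κ_E‖ ≤ 1`. For uniqueness, `κ_E(E)` is weak-star
dense in `E''` (finitely many functionals take prescribed values at some point of `E`), so
separate weak-star continuity determines `B` one slot at a time, from the last to the first. -/

theorem LinearMap.exists_forall_apply_eq_of_injective {ι 𝕜 E F : Type*} [Fintype ι] [Field 𝕜]
    [AddCommGroup E] [Module 𝕜 E] [AddCommGroup F] [Module 𝕜 F] (B : F →ₗ[𝕜] E →ₗ[𝕜] 𝕜)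
    (hB : Function.Injective B) (z : F →ₗ[𝕜] 𝕜) (f : ι → F) :
    ∃ x : E, ∀ i, B (f i) x = z (f i) := by
  classical
  let T : E →ₗ[𝕜] ι → 𝕜 := LinearMap.pi fun i => B (f i)
  by_contra! h
  have hz : (fun i => z (f i)) ∉ LinearMap.range T := by
    rintro ⟨x, hx⟩
    obtain ⟨i, hi⟩ := h x
    exact hi (congrFun hx i)
  obtain ⟨φ, hφz, hφT⟩ := Submodule.exists_dual_map_eq_bot_of_notMem hz inferInstance
  -- `φ` pulls back to the combination `g` of the `f i`, which `B` kills but `z` does not.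
  set g := ∑ i, φ (fun j => if i = j then 1 else 0) • f i
  have hg : B g = 0 := by
    ext x
    have hx : φ (T x) = 0 :=
      (Submodule.mem_bot 𝕜).mp (hφT ▸ Submodule.mem_map_of_mem (LinearMap.mem_range_self T x))
    rw [LinearMap.pi_apply_eq_sum_univ φ] at hx
    simpa [g, T, mul_comm] using hx
  apply hφz
  rw [LinearMap.pi_apply_eq_sum_univ φ]
  simpa [g, map_sum, mul_comm] using congrArg z ((injective_iff_map_eq_zero B).mp hB g hg)

open Filter in
theorem NormedSpace.denseRange_toWeakDual_inclusionInDoubleDual (𝕜 : Type*)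
    [NontriviallyNormedField 𝕜] (E : Type*) [SeminormedAddCommGroup E] [NormedSpace 𝕜 E] :
    DenseRange fun x : E => StrongDual.toWeakDual (inclusionInDoubleDual 𝕜 E x) := by
  intro z
  have hx (I : Finset (StrongDual 𝕜 E)) : ∃ x : E, ∀ f : I, (f : StrongDual 𝕜 E) x = z f :=
    (ContinuousLinearMap.coeLM 𝕜).exists_forall_apply_eq_of_injective
      ContinuousLinearMap.coe_injective z.toLinearMap (fun f : I => (f : StrongDual 𝕜 E))
  choose x hx using hx
  refine mem_closure_of_tendsto
    (f := fun I => StrongDual.toWeakDual (inclusionInDoubleDual 𝕜 E (x I))) (b := atTop) ?_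
    (Eventually.of_forall fun I => Set.mem_range_self _)
  refine tendsto_iff_forall_eval_tendsto_topDualPairing.mpr fun f => ?_
  refine tendsto_const_nhds.congr' ?_
  filter_upwards [eventually_ge_atTop {f}] with I hI
  exact (hx I ⟨f, hI (Finset.mem_singleton_self f)⟩).symm

theorem ContinuousLinearMap.norm_flipMultilinear_le {𝕜 ι G G' : Type*}
    [NontriviallyNormedField 𝕜] [Fintype ι] {E : ι → Type*} [∀ i, SeminormedAddCommGroup (E i)]
    [∀ i, NormedSpace 𝕜 (E i)] [SeminormedAddCommGroup G] [NormedSpace 𝕜 G]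
    [SeminormedAddCommGroup G'] [NormedSpace 𝕜 G']
    (f : G →L[𝕜] ContinuousMultilinearMap 𝕜 E G') : ‖f.flipMultilinear‖ ≤ ‖f‖ :=
  MultilinearMap.mkContinuous_norm_le _ (norm_nonneg f) _

namespace NormedSpace

variable (𝕜 : Type*) [NontriviallyNormedField 𝕜] (E : Type*) [NormedAddCommGroup E]
  [NormedSpace 𝕜 E]

local notation "E''" => StrongDual 𝕜 (StrongDual 𝕜 E)

-- Instance search misses the normed structure of the (bi)dual inside the families
-- `fun _ : Fin n => E''` unless it is offered directly.
noncomputable local instance : NormedAddCommGroup (StrongDual 𝕜 E) := inferInstance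

noncomputable local instance : NormedSpace 𝕜 (StrongDual 𝕜 E) := inferInstance

noncomputable local instance : NormedAddCommGroup E'' := inferInstance

noncomputable local instance : NormedSpace 𝕜 E'' := inferInstance

noncomputable def aronBernerStep (n : ℕ) :
    (E →L[𝕜] ContinuousMultilinearMap 𝕜 (fun _ : Fin n => E'') 𝕜) →L[𝕜]
      ContinuousMultilinearMap 𝕜 (fun _ : Fin (n + 1) => E'') 𝕜 :=
  ((continuousMultilinearCurryLeftEquiv 𝕜 (fun _ : Fin (n + 1) => E'') 𝕜).symm
      |>.toContinuousLinearEquiv.toContinuousLinearMap) ∘L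
    (ContinuousLinearMap.compContinuousMultilinearMapL 𝕜 (fun _ : Fin n => E'')
      (StrongDual 𝕜 E) 𝕜).flip ∘L
    (ContinuousLinearMap.flipMultilinearEquiv 𝕜 (fun _ : Fin n => E'') E 𝕜).toContinuousLinearMap

variable {𝕜 E} in
theorem aronBernerStep_apply {n : ℕ}
    (f : E →L[𝕜] ContinuousMultilinearMap 𝕜 (fun _ : Fin n => E'') 𝕜) (z : Fin (n + 1) → E'') :
    aronBernerStep 𝕜 E n f z = z 0 (f.flipMultilinear (Fin.tail z)) := rfl

variable {𝕜 E} in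
theorem norm_aronBernerStep_apply_le {n : ℕ}
    (f : E →L[𝕜] ContinuousMultilinearMap 𝕜 (fun _ : Fin n => E'') 𝕜) :
    ‖aronBernerStep 𝕜 E n f‖ ≤ ‖f‖ := by
  refine ContinuousMultilinearMap.opNorm_le_bound (norm_nonneg f) fun z => ?_
  rw [aronBernerStep_apply, Fin.prod_univ_succ, mul_left_comm]
  calc ‖z 0 (f.flipMultilinear (Fin.tail z))‖
      ≤ ‖z 0‖ * ‖f.flipMultilinear (Fin.tail z)‖ := (z 0).le_opNorm _
    _ ≤ ‖z 0‖ * (‖f‖ * ∏ i, ‖Fin.tail z i‖) :=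
      mul_le_mul_of_nonneg_left (f.flipMultilinear.le_of_opNorm_le f.norm_flipMultilinear_le _)
        (norm_nonneg _)

noncomputable def aronBernerExt : (n : ℕ) →
    ContinuousMultilinearMap 𝕜 (fun _ : Fin n => E) 𝕜 →L[𝕜]
      ContinuousMultilinearMap 𝕜 (fun _ : Fin n => E'') 𝕜
  | 0 => ((continuousMultilinearCurryFin0 𝕜 E 𝕜).trans
      (continuousMultilinearCurryFin0 𝕜 E'' 𝕜).symm).toLinearIsometry.toContinuousLinearMap
  | n + 1 => aronBernerStep 𝕜 E n ∘L ContinuousLinearMap.compL 𝕜 E _ _ (aronBernerExt n) ∘L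
      ((continuousMultilinearCurryLeftEquiv 𝕜 (fun _ : Fin (n + 1) => E) 𝕜)
        |>.toContinuousLinearEquiv.toContinuousLinearMap)

variable {𝕜 E}

theorem aronBernerExt_succ_apply {n : ℕ}
    (A : ContinuousMultilinearMap 𝕜 (fun _ : Fin (n + 1) => E) 𝕜) (z : Fin (n + 1) → E'') :
    aronBernerExt 𝕜 E (n + 1) A z =
      z 0 (((aronBernerExt 𝕜 E n).comp A.curryLeft).flipMultilinear (Fin.tail z)) := rfl

theorem norm_aronBernerExt_apply_le :
    ∀ {n : ℕ} (A : ContinuousMultilinearMap 𝕜 (fun _ : Fin n => E) 𝕜),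
      ‖aronBernerExt 𝕜 E n A‖ ≤ ‖A‖
  | 0, A => (LinearIsometry.norm_map _ A).le
  | n + 1, A => by
    refine (norm_aronBernerStep_apply_le _).trans ?_
    refine ContinuousLinearMap.opNorm_le_bound _ (norm_nonneg A) fun x => ?_
    calc ‖aronBernerExt 𝕜 E n (A.curryLeft x)‖ ≤ ‖A.curryLeft x‖ :=
          norm_aronBernerExt_apply_le _
      _ ≤ ‖A‖ * ‖x‖ := A.curryLeft.le_of_opNorm_le A.curryLeft_norm.le x

theorem aronBernerExt_apply_inclusionInDoubleDual : ∀ {n : ℕ}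
    (A : ContinuousMultilinearMap 𝕜 (fun _ : Fin n => E) 𝕜) (x : Fin n → E),
    aronBernerExt 𝕜 E n A (fun j => inclusionInDoubleDual 𝕜 E (x j)) = A x
  | 0, A, x => congrArg A (Subsingleton.elim _ _)
  | n + 1, A, x =>
    calc aronBernerExt 𝕜 E (n + 1) A (fun j => inclusionInDoubleDual 𝕜 E (x j))
        = aronBernerExt 𝕜 E n (A.curryLeft (x 0))
            (fun j => inclusionInDoubleDual 𝕜 E (Fin.tail x j)) := rfl
      _ = A x := by
        rw [aronBernerExt_apply_inclusionInDoubleDual, A.curryLeft_apply, Fin.cons_self_tail]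

theorem continuous_aronBernerExt_apply_ite : ∀ {n : ℕ}
    (A : ContinuousMultilinearMap 𝕜 (fun _ : Fin n => E) 𝕜) (j : Fin n) (x : Fin n → E)
    (z : Fin n → E''),
    Continuous fun w : WeakDual 𝕜 (StrongDual 𝕜 E) =>
      aronBernerExt 𝕜 E n A (fun l => if l < j then inclusionInDoubleDual 𝕜 E (x l)
        else if l = j then StrongDual.toWeakDual.symm w else z l)
  | 0, _, j, _, _ => j.elim0
  | n + 1, A, j, x, z => by
    induction j using Fin.cases with
    | zero =>
      have h : ∀ w : WeakDual 𝕜 (StrongDual 𝕜 E),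
          aronBernerExt 𝕜 E (n + 1) A (fun l => if l < 0 then inclusionInDoubleDual 𝕜 E (x l)
            else if l = 0 then StrongDual.toWeakDual.symm w else z l) =
          w (((aronBernerExt 𝕜 E n).comp A.curryLeft).flipMultilinear (Fin.tail z)) := by
        intro w
        have htail : Fin.tail (fun l => if l < 0 then inclusionInDoubleDual 𝕜 E (x l)
            else if l = 0 then StrongDual.toWeakDual.symm w else z l) = Fin.tail z :=
          funext fun l => by simp [Fin.tail, Fin.succ_ne_zero]
        rw [aronBernerExt_succ_apply, htail]
        simp
      simp only [h]
      exact WeakDual.eval_continuous _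
    | succ i =>
      have h : ∀ w : WeakDual 𝕜 (StrongDual 𝕜 E),
          aronBernerExt 𝕜 E (n + 1) A (fun l => if l < i.succ then inclusionInDoubleDual 𝕜 E (x l)
            else if l = i.succ then StrongDual.toWeakDual.symm w else z l) =
          aronBernerExt 𝕜 E n (A.curryLeft (x 0))
            (fun l => if l < i then inclusionInDoubleDual 𝕜 E (Fin.tail x l)
              else if l = i then StrongDual.toWeakDual.symm w else Fin.tail z l) := by
        intro w
        rw [aronBernerExt_succ_apply, if_pos (Fin.succ_pos i)]
        show aronBernerExt 𝕜 E n (A.curryLeft (x 0)) _ = _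
        congr 1
        funext l
        simp [Fin.tail, Fin.succ_lt_succ_iff, Fin.succ_inj]
      simp only [h]
      exact continuous_aronBernerExt_apply_ite _ i _ _

theorem norm_le_of_apply_inclusionInDoubleDual {n : ℕ}
    {A : ContinuousMultilinearMap 𝕜 (fun _ : Fin n => E) 𝕜}
    {B : ContinuousMultilinearMap 𝕜 (fun _ : Fin n => E'') 𝕜}
    (h : ∀ x : Fin n → E, B (fun j => inclusionInDoubleDual 𝕜 E (x j)) = A x) : ‖A‖ ≤ ‖B‖ := by
  have hA : B.compContinuousLinearMap (fun _ => inclusionInDoubleDual 𝕜 E) = A := by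
    ext x
    exact h x
  calc ‖A‖ ≤ ‖B‖ * ∏ _i : Fin n, ‖inclusionInDoubleDual 𝕜 E‖ :=
        hA ▸ B.norm_compContinuousLinearMap_le _
    _ ≤ ‖B‖ := mul_le_of_le_one_right (norm_nonneg B)
        (Finset.prod_le_one (fun _ _ => norm_nonneg _) fun _ _ =>
          inclusionInDoubleDual_norm_le 𝕜 E)

end NormedSpace

theorem IsAronBernerExtension.unique {𝕜 : Type*} [RCLike 𝕜] {E : Type*} [NormedAddCommGroup E]
    [NormedSpace 𝕜 E] {n : ℕ} {A : ContinuousMultilinearMap 𝕜 (fun _ : Fin n => E) 𝕜}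
    {B₁ B₂ : ContinuousMultilinearMap 𝕜 (fun _ : Fin n => StrongDual 𝕜 (StrongDual 𝕜 E)) 𝕜}
    (h₁ : IsAronBernerExtension A B₁) (h₂ : IsAronBernerExtension A B₂) : B₁ = B₂ := by
  -- Descending induction on `k`: slot `k` is freed by the weak-star density of `κ_E(E)`.
  have key : ∀ k ≤ n, ∀ (x : Fin n → E) (z : Fin n → StrongDual 𝕜 (StrongDual 𝕜 E)),
      B₁ (fun l : Fin n => if (l : ℕ) < k then inclusionInDoubleDual 𝕜 E (x l) else z l) =
        B₂ (fun l : Fin n => if (l : ℕ) < k then inclusionInDoubleDual 𝕜 E (x l) else z l) := by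
    intro k hk
    induction hk using Nat.decreasingInduction with
    | self =>
      intro x z
      simp only [Fin.is_lt, if_true, h₁.1, h₂.1]
    | of_succ k hk ih =>
      intro x z
      set j : Fin n := ⟨k, hk⟩
      have hslice : ∀ w : StrongDual 𝕜 (StrongDual 𝕜 E),
          (fun l => if l < j then inclusionInDoubleDual 𝕜 E (x l) else if l = j then w else z l) =
            fun l : Fin n => if (l : ℕ) < k then inclusionInDoubleDual 𝕜 E (x l)
              else Function.update z j w l := by
        intro w
        funext l
        simp only [Function.update_apply, Fin.lt_def, j]
      have hstep : ∀ y : E,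
          (fun l : Fin n => if (l : ℕ) < k then inclusionInDoubleDual 𝕜 E (x l)
            else Function.update z j (inclusionInDoubleDual 𝕜 E y) l) =
          fun l : Fin n => if (l : ℕ) < k + 1
            then inclusionInDoubleDual 𝕜 E (Function.update x j y l) else z l := by
        intro y
        funext l
        simp only [Function.update_apply, Fin.ext_iff, j]
        split_ifs <;> first | rfl | omega
      have hslot := congrFun ((denseRange_toWeakDual_inclusionInDoubleDual 𝕜 E).equalizer
        (h₁.2 j x z) (h₂.2 j x z) (funext fun y => by
          simpa only [Function.comp_apply, LinearEquiv.symm_apply_apply, hslice, hstep]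
            using ih (Function.update x j y) z)) (StrongDual.toWeakDual (z j))
      simpa only [LinearEquiv.symm_apply_apply, hslice, Function.update_eq_self] using hslot
  ext z
  simpa using key 0 n.zero_le 0 z

theorem aronBernerExtension_existsUnique_and_isometric_general
    (𝕜 : Type*) [RCLike 𝕜] (E : Type*) [NormedAddCommGroup E] [NormedSpace 𝕜 E]
    (n : ℕ)
    (A : ContinuousMultilinearMap 𝕜 (fun _ : Fin n => E) 𝕜) :
    (∃! B : ContinuousMultilinearMap 𝕜 (fun _ : Fin n => StrongDual 𝕜 (StrongDual 𝕜 E)) 𝕜,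
      IsAronBernerExtension A B) ∧
    (∀ B : ContinuousMultilinearMap 𝕜 (fun _ : Fin n => StrongDual 𝕜 (StrongDual 𝕜 E)) 𝕜,
      IsAronBernerExtension A B →
        (ContinuousMultilinearMap.hasOpNorm' (𝕜 := 𝕜) (ι := Fin n)
          (G := StrongDual 𝕜 (StrongDual 𝕜 E)) (G' := 𝕜)).norm B = ‖A‖) := by
  have hAB : IsAronBernerExtension A (aronBernerExt 𝕜 E n A) :=
    ⟨aronBernerExt_apply_inclusionInDoubleDual A, continuous_aronBernerExt_apply_ite A⟩
  refine ⟨⟨_, hAB, fun B hB => hB.unique hAB⟩, fun B hB => ?_⟩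
  rw [hB.unique hAB]
  exact (norm_aronBernerExt_apply_le A).antisymm (norm_le_of_apply_inclusionInDoubleDual hAB.1)

theorem aronBernerExtension_existsUnique_and_isometric
    (𝕜 : Type*) [RCLike 𝕜] (E : Type*) [NormedAddCommGroup E] [NormedSpace 𝕜 E]
    [CompleteSpace E] (n : ℕ) (hn : 1 ≤ n)
    (A : ContinuousMultilinearMap 𝕜 (fun _ : Fin n => E) 𝕜) :
    (∃! B : ContinuousMultilinearMap 𝕜 (fun _ : Fin n => StrongDual 𝕜 (StrongDual 𝕜 E)) 𝕜,
      IsAronBernerExtension A B) ∧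
    (∀ B : ContinuousMultilinearMap 𝕜 (fun _ : Fin n => StrongDual 𝕜 (StrongDual 𝕜 E)) 𝕜,
      IsAronBernerExtension A B →
        (ContinuousMultilinearMap.hasOpNorm' (𝕜 := 𝕜) (ι := Fin n)
          (G := StrongDual 𝕜 (StrongDual 𝕜 E)) (G' := 𝕜)).norm B = ‖A‖) :=
  aronBernerExtension_existsUnique_and_isometric_general 𝕜 E n A
end
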